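/- Let m ≥ 2, M a set with |M| = m+1, a ≠ b in M, and F ⊆ { {a,b}, M∖{a}, M∖{b} }. Then there exists a surjective pp-morphism from the reduced poset P(M,F) onto the poset B with one bottom element and m maximal elements, defined by collapsing {a} and {b} to a single maximal point, mapping the remaining singletons bijectively onto the other m−1 maximal points of B, sending {a,b} (if present) to the common image of {a} and {b}, and sending M, M∖{a}, M∖{b} (those present) to the bottom of B. -/

import Mathlib

/-!
Choose `g : α → Fin m` that identifies `a` and `b` and maps the rest of `M` bijectively onto
`Fin m`. Under `g`, every member of `P(M, F)` is either sent to a single point `i` (the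
singletons and `{a, b}`) or onto all of `Fin m` (`M`, `M ∖ {a}`, `M ∖ {b}`); send it to the
maximal point `some i`, resp. to the bottom `none`. The maximal elements of `P(M, F)` are the
singletons, so `M(X)` is mapped onto `some '' g[X]`, which is `M(some i) = {some i}` resp. all
maximal points of `B`. Monotonicity holds because `X ≤ Y` means `Y ⊆ X`, and `g` is constant on
`Y`, with the same value, whenever it is constant on `X`.
-/

open Set Function

variable {α β γ : Type*}

/-- `Mset x` is the set of maximal elements (of the ambient poset) lying above `x`. -/
def Mset [PartialOrder α] (x : α) : Set α := {y | IsMax y ∧ x ≤ y}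

/-- A pp-morphism: an order-preserving map `h` with `M(h x) = h[M x]` for all `x`. -/
def IsPP [PartialOrder α] [PartialOrder β] (h : α → β) : Prop :=
  Monotone h ∧ ∀ x, Mset (h x) = h '' Mset x

/-- The reverse-inclusion partial order on a family of subsets. -/
def revPO (p : Set α → Prop) : PartialOrder {S : Set α // p S} :=
  PartialOrder.lift (fun A => OrderDual.toDual (A : Set α))
    (fun A B h => Subtype.ext (by simpa using h))

/-- Membership in the reduced poset `P(M, F)`: the base `M`, the singletons of elements
of `M`, and the members of `F`. -/
def RMem (M : Set α) (F : Set (Set α)) (S : Set α) : Prop :=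
  S = M ∨ (∃ m ∈ M, S = {m}) ∨ S ∈ F

/-- The reduced poset `P(M, F)`, ordered by reverse inclusion. -/
def Red (M : Set α) (F : Set (Set α)) := {S : Set α // RMem M F S}

instance (M : Set α) (F : Set (Set α)) : PartialOrder (Red M F) := revPO _

/-- The bottom element `M` of the reduced poset `P(M, F)`. -/
def botElem (M : Set α) (F : Set (Set α)) : Red M F := ⟨M, Or.inl rfl⟩

/-- The singleton element `{x}` (for `x ∈ M`) of the reduced poset `P(M, F)`. -/
def singElem (M : Set α) (F : Set (Set α)) {x : α} (hx : x ∈ M) : Red M F :=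
  ⟨{x}, Or.inr (Or.inl ⟨x, hx, rfl⟩)⟩

/-- The poset `B_m` with a bottom element `none` and `m` pairwise incomparable
maximal elements `some i` above it. -/
def Bm (m : ℕ) := Option (Fin m)

instance (m : ℕ) : PartialOrder (Bm m) where
  le x y := x = y ∨ x = none
  le_refl x := Or.inl rfl
  le_trans x y z h₁ h₂ := by
    rcases h₁ with rfl | rfl
    · exact h₂
    · exact Or.inr rfl
  le_antisymm x y h₁ h₂ := by
    rcases h₁ with rfl | rfl
    · rfl
    · rcases h₂ with rfl | rfl <;> rfl

theorem exists_surjOn_fin_identifying_pair {M : Set α} {m : ℕ} (hM : M.Finite)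
    (hMcard : M.ncard = m + 1) {a b : α} (ha : a ∈ M) (hb : b ∈ M) (hab : a ≠ b) :
    ∃ g : α → Fin m, SurjOn g M univ ∧
      ∀ c ∈ M, ∀ d ∈ M, (g c = g d ↔ c = d ∨ ({c, d} : Set α) = {a, b}) := by
  classical
  have haM : a ∈ M \ {b} := ⟨ha, hab⟩
  have hcard : (M \ {b}).ncard = m := by
    rw [ncard_sdiff_singleton_of_mem hb, hMcard, Nat.add_sub_cancel]
  have : Nonempty (Fin m) := ⟨⟨0, hcard ▸ (ncard_pos hM.sdiff).mpr ⟨a, haM⟩⟩⟩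
  obtain ⟨φ, hφ⟩ := hM.sdiff.exists_bijOn_of_encard_eq (t := (univ : Set (Fin m)))
    (by rw [← hM.sdiff.cast_ncard_eq, hcard]; simp)
  set r : α → α := fun x => if x = b then a else x
  have hrM : MapsTo r M (M \ {b}) := fun x hx => by
    dsimp only [r]
    split_ifs with hxb
    exacts [haM, ⟨hx, hxb⟩]
  refine ⟨φ ∘ r, fun i _ => ?_, fun c hc d hd => ?_⟩
  · obtain ⟨x, hx, rfl⟩ := hφ.surjOn (mem_univ i)
    exact ⟨x, hx.1, congrArg φ (if_neg hx.2)⟩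
  · rw [comp_apply, comp_apply, hφ.injOn.eq_iff (hrM hc) (hrM hd), pair_eq_pair_iff]
    simp only [r]
    split_ifs <;> grind

namespace Bm

variable {m : ℕ}

theorem le_iff {x y : Bm m} : x ≤ y ↔ x = y ∨ x = none := Iff.rfl

theorem mset_some (i : Fin m) : Mset (α := Bm m) (some i) = {some i} := by
  ext y
  constructor
  · rintro ⟨-, rfl | h⟩
    exacts [rfl, (Option.some_ne_none _ h).elim]
  · rintro rfl
    refine ⟨fun z hz => Or.inl ?_, le_rfl⟩
    rcases hz with h | h
    exacts [h.symm, (Option.some_ne_none _ h).elim]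

theorem mset_none (hm : 0 < m) : Mset (α := Bm m) none = range some := by
  ext (_ | i)
  · refine iff_of_false (fun ⟨hmax, _⟩ => ?_) (fun ⟨_, h⟩ => Option.some_ne_none _ h)
    rcases hmax (b := (some ⟨0, hm⟩ : Bm m)) (Or.inr rfl) with h | h <;> cases h
  · exact iff_of_true ⟨((mset_some i).ge rfl).1, Or.inr rfl⟩ ⟨i, rfl⟩

end Bm

namespace Red

variable {M : Set α} {F : Set (Set α)}

theorem le_iff {X Y : Red M F} : X ≤ Y ↔ Y.1 ⊆ X.1 := Iff.rfl

theorem nonempty_and_subset (hM : M.Nonempty) (hF : ∀ S ∈ F, S.Nonempty ∧ S ⊆ M)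
    (X : Red M F) : X.1.Nonempty ∧ X.1 ⊆ M := by
  obtain ⟨S, rfl | ⟨c, hc, rfl⟩ | hS⟩ := X
  exacts [⟨hM, subset_rfl⟩, ⟨singleton_nonempty c, singleton_subset_iff.mpr hc⟩, hF S hS]

theorem eq_of_le_of_eq_singleton (hM : M.Nonempty) (hF : ∀ S ∈ F, S.Nonempty ∧ S ⊆ M)
    {X Y : Red M F} {c : α} (hX : X.1 = {c}) (hXY : X ≤ Y) : Y.1 = {c} :=
  (subset_singleton_iff_eq.mp (hX ▸ hXY)).resolve_left (nonempty_and_subset hM hF Y).1.ne_empty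

theorem isMax_iff (hM : M.Nonempty) (hF : ∀ S ∈ F, S.Nonempty ∧ S ⊆ M) {X : Red M F} :
    IsMax X ↔ ∃ c, X.1 = {c} := by
  constructor
  · intro hX
    obtain ⟨c, hc⟩ := (nonempty_and_subset hM hF X).1
    have hle : X ≤ singElem M F ((nonempty_and_subset hM hF X).2 hc) :=
      singleton_subset_iff.mpr hc
    exact ⟨c, congrArg Subtype.val ((hX hle).antisymm' hle)⟩
  · rintro ⟨c, hc⟩ Y hY
    exact le_iff.mpr (eq_of_le_of_eq_singleton hM hF hc hY ▸ hc ▸ subset_rfl)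

theorem mset_eq (hM : M.Nonempty) (hF : ∀ S ∈ F, S.Nonempty ∧ S ⊆ M) (X : Red M F) :
    Mset X = {Y | ∃ c ∈ X.1, Y.1 = {c}} := by
  ext Y
  simp only [Mset, mem_ofPred_eq, isMax_iff hM hF, le_iff]
  constructor
  · rintro ⟨⟨c, hc⟩, hYX⟩
    exact ⟨c, hYX (hc ▸ rfl), hc⟩
  · rintro ⟨c, hcX, hc⟩
    exact ⟨⟨c, hc⟩, hc ▸ singleton_subset_iff.mpr hcX⟩

variable {m : ℕ}

open Classical in
noncomputable def collapse (g : α → Fin m) (X : Red M F) : Bm m :=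
  if h : ∃ i, g '' X.1 = {i} then some h.choose else none

variable {g : α → Fin m} {X : Red M F}

theorem collapse_of_image_eq {i : Fin m} (h : g '' X.1 = {i}) : collapse g X = some i := by
  have hex : ∃ i, g '' X.1 = {i} := ⟨i, h⟩
  exact (dif_pos hex).trans (congrArg some (singleton_injective (hex.choose_spec.symm.trans h)))

theorem collapse_eq_none_iff : collapse g X = none ↔ ∀ i, g '' X.1 ≠ {i} := by
  by_cases h : ∃ i, g '' X.1 = {i}
  · obtain ⟨i, hi⟩ := h
    simp [collapse_of_image_eq hi, hi]
  · exact iff_of_true (dif_neg h) (not_exists.mp h)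

theorem collapse_eq_none_of_image_eq_univ (hm : 2 ≤ m) (hX : g '' X.1 = univ) :
    collapse g X = none :=
  have : Nontrivial (Fin m) := Fin.nontrivial_iff_two_le.mpr hm
  collapse_eq_none_iff.mpr fun _ => hX ▸ nontrivial_univ.ne_singleton

theorem image_collapse_mset (hM : M.Nonempty) (hF : ∀ S ∈ F, S.Nonempty ∧ S ⊆ M) :
    collapse g '' Mset X = some '' (g '' X.1) := by
  rw [mset_eq hM hF, image_image]
  ext y
  constructor
  · rintro ⟨Y, ⟨c, hc, hY⟩, rfl⟩
    exact ⟨c, hc, (collapse_of_image_eq (by rw [hY, image_singleton])).symm⟩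
  · rintro ⟨c, hc, rfl⟩
    exact ⟨singElem M F ((nonempty_and_subset hM hF X).2 hc), ⟨c, hc, rfl⟩,
      collapse_of_image_eq (image_singleton (f := g))⟩

theorem isPP_collapse (hM : M.Nonempty) (hF : ∀ S ∈ F, S.Nonempty ∧ S ⊆ M)
    (hg : ∀ X : Red M F, (∃ i, g '' X.1 = {i}) ∨ g '' X.1 = univ) :
    IsPP (collapse g : Red M F → Bm m) := by
  refine ⟨fun X Y hXY => ?_, fun X => ?_⟩
  · by_cases h : ∃ i, g '' X.1 = {i}
    · obtain ⟨i, hi⟩ := h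
      have hY : g '' Y.1 = {i} :=
        (subset_singleton_iff_eq.mp (hi ▸ image_mono hXY)).resolve_left
          ((nonempty_and_subset hM hF Y).1.image g).ne_empty
      rw [collapse_of_image_eq hi, collapse_of_image_eq hY]
      exact le_rfl
    · rw [not_exists] at h
      exact Bm.le_iff.mpr (Or.inr (collapse_eq_none_iff.mpr h))
  · rw [image_collapse_mset hM hF]
    by_cases h : ∃ i, g '' X.1 = {i}
    · obtain ⟨i, hi⟩ := h
      rw [collapse_of_image_eq hi, hi, image_singleton, Bm.mset_some]
      rfl
    · rw [not_exists] at h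
      rw [collapse_eq_none_iff.mpr h, (hg X).resolve_left (not_exists.mpr h), image_univ,
        Bm.mset_none (Fin.pos (g hM.some))]

end Red

section Images

variable {M S : Set α} {a b : α} {g : α → β}

theorem image_pair_eq_singleton (hgab : g a = g b) : g '' {a, b} = {g a} := by
  rw [image_pair, hgab, pair_eq_singleton]

theorem exists_image_eq_singleton (hgab : g a = g b) (hS : (∃ c, S = {c}) ∨ S = {a, b}) :
    ∃ i, g '' S = {i} := by
  rcases hS with ⟨c, rfl⟩ | rfl
  exacts [⟨g c, image_singleton⟩, ⟨g a, image_pair_eq_singleton hgab⟩]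

theorem image_eq_univ_of_sdiff_pair_subset (hgM : SurjOn g M univ) (hgab : g a = g b)
    (hMS : M \ {a, b} ⊆ S) (hS : a ∈ S ∨ b ∈ S) : g '' S = univ := by
  refine eq_univ_of_univ_subset fun i _ => ?_
  obtain ⟨c, hcM, rfl⟩ := hgM (mem_univ i)
  by_cases hc : c = a ∨ c = b
  · rcases hS with haS | hbS
    · exact ⟨a, haS, by rcases hc with rfl | rfl <;> simp [hgab]⟩
    · exact ⟨b, hbS, by rcases hc with rfl | rfl <;> simp [hgab]⟩
  · exact ⟨c, hMS ⟨hcM, by simpa using hc⟩, rfl⟩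

end Images

section PairCollapse

variable {M : Set α} {F : Set (Set α)} {a b : α} {m : ℕ} {g : α → Fin m}

theorem image_eq_univ_of_eq_sdiff {S : Set α} (hgM : SurjOn g M univ) (hgab : g a = g b)
    (ha : a ∈ M) (hb : b ∈ M) (hab : a ≠ b) (hS : S = M ∨ S = M \ {a} ∨ S = M \ {b}) :
    g '' S = univ := by
  rcases hS with rfl | rfl | rfl
  · exact image_eq_univ_of_sdiff_pair_subset hgM hgab sdiff_subset (Or.inl ha)
  · exact image_eq_univ_of_sdiff_pair_subset hgM hgab (sdiff_subset_sdiff_right (by simp))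
      (Or.inr ⟨hb, hab.symm⟩)
  · exact image_eq_univ_of_sdiff_pair_subset hgM hgab (sdiff_subset_sdiff_right (by simp))
      (Or.inl ⟨ha, hab⟩)

theorem nonempty_and_subset_of_mem_pair_sdiff (ha : a ∈ M) (hb : b ∈ M) (hab : a ≠ b)
    (hF : F ⊆ {{a, b}, M \ {a}, M \ {b}}) : ∀ S ∈ F, S.Nonempty ∧ S ⊆ M := by
  intro S hS
  rcases hF hS with rfl | rfl | rfl
  exacts [⟨insert_nonempty a {b}, pair_subset ha hb⟩, ⟨⟨b, hb, hab.symm⟩, sdiff_subset⟩,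
    ⟨⟨a, ha, hab⟩, sdiff_subset⟩]

theorem Red.val_eq_of_subset_pair_sdiff (hF : F ⊆ {{a, b}, M \ {a}, M \ {b}}) (X : Red M F) :
    (∃ c, X.1 = {c}) ∨ X.1 = {a, b} ∨ X.1 = M ∨ X.1 = M \ {a} ∨ X.1 = M \ {b} := by
  obtain ⟨S, rfl | hS | hS⟩ := X
  · exact Or.inr (Or.inr (Or.inl rfl))
  · exact Or.inl (hS.imp fun _ => And.right)
  · rcases hF hS with h | h | h
    exacts [Or.inr (Or.inl h), Or.inr (Or.inr (Or.inr (Or.inl h))),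
      Or.inr (Or.inr (Or.inr (Or.inr h)))]

theorem Red.image_eq_singleton_or_eq_univ (hF : F ⊆ {{a, b}, M \ {a}, M \ {b}})
    (hgM : SurjOn g M univ) (hgab : g a = g b) (ha : a ∈ M) (hb : b ∈ M) (hab : a ≠ b)
    (X : Red M F) :
    (∃ i, g '' X.1 = {i}) ∨ g '' X.1 = univ := by
  rcases Red.val_eq_of_subset_pair_sdiff hF X with hX | hX | hX
  exacts [Or.inl (exists_image_eq_singleton hgab (Or.inl hX)),
    Or.inl (exists_image_eq_singleton hgab (Or.inr hX)),
    Or.inr (image_eq_univ_of_eq_sdiff hgM hgab ha hb hab hX)]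

theorem Red.collapse_eq_none_iff_of_subset_pair_sdiff (hF : F ⊆ {{a, b}, M \ {a}, M \ {b}})
    (hgM : SurjOn g M univ) (hgab : g a = g b) (ha : a ∈ M) (hb : b ∈ M) (hab : a ≠ b)
    (hm : 2 ≤ m) (X : Red M F) :
    Red.collapse g X = none ↔ X.1 = M ∨ X.1 = M \ {a} ∨ X.1 = M \ {b} := by
  refine ⟨fun h => ?_, fun hX =>
    Red.collapse_eq_none_of_image_eq_univ hm (image_eq_univ_of_eq_sdiff hgM hgab ha hb hab hX)⟩
  rcases Red.val_eq_of_subset_pair_sdiff hF X with hX | hX | hX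
  · obtain ⟨i, hi⟩ := exists_image_eq_singleton hgab (Or.inl hX)
    exact absurd (h ▸ Red.collapse_of_image_eq hi) (Option.some_ne_none i).symm
  · obtain ⟨i, hi⟩ := exists_image_eq_singleton hgab (Or.inr hX)
    exact absurd (h ▸ Red.collapse_of_image_eq hi) (Option.some_ne_none i).symm
  · exact hX

end PairCollapse

/-- If `|M| = m + 1` (`m ≥ 2`), `a ≠ b` in `M`, and `F ⊆ { {a,b}, M∖{a}, M∖{b} }`, then
there is a surjective pp-morphism `P(M,F) → B_m` collapsing exactly `{a}` and `{b}`,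
sending `M`, `M∖{a}`, `M∖{b}` to the bottom, and sending `{a,b}` to the image of `{a}`. -/
theorem stmt14 (m : ℕ) (hm : 2 ≤ m) (M : Set α) (hM : M.Finite) (hMcard : M.ncard = m + 1)
    {a b : α} (ha : a ∈ M) (hb : b ∈ M) (hab : a ≠ b)
    (F : Set (Set α)) (hF : F ⊆ ({({a, b} : Set α), M \ {a}, M \ {b}} : Set (Set α))) :
    ∃ f : Red M F → Bm m,
      Function.Surjective f ∧ IsPP f ∧
      (∀ c (hc : c ∈ M), ∀ d (hd : d ∈ M),
        (f (singElem M F hc) = f (singElem M F hd) ↔ (c = d ∨ ({c, d} : Set α) = {a, b}))) ∧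
      (∀ X : Red M F, f X = (none : Bm m) ↔
        (X.1 = M ∨ X.1 = M \ {a} ∨ X.1 = M \ {b})) ∧
      (∀ h : ({a, b} : Set α) ∈ F,
        f ⟨{a, b}, Or.inr (Or.inr h)⟩ = f (singElem M F ha)) := by
  obtain ⟨g, hgM, hg⟩ := exists_surjOn_fin_identifying_pair hM hMcard ha hb hab
  have hgab : g a = g b := (hg a ha b hb).mpr (Or.inr rfl)
  have hsing : ∀ c (hc : c ∈ M), Red.collapse g (singElem M F hc) = some (g c) :=
    fun _ _ => Red.collapse_of_image_eq image_singleton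
  have hnone := Red.collapse_eq_none_iff_of_subset_pair_sdiff hF hgM hgab ha hb hab hm
  have hpp : IsPP (Red.collapse g : Red M F → Bm m) :=
    Red.isPP_collapse ⟨a, ha⟩ (nonempty_and_subset_of_mem_pair_sdiff ha hb hab hF)
      (Red.image_eq_singleton_or_eq_univ hF hgM hgab ha hb hab)
  refine ⟨Red.collapse g, ?_, hpp, fun c hc d hd => ?_, hnone, fun h => ?_⟩
  · rintro (_ | i)
    · exact ⟨botElem M F, (hnone _).mpr (Or.inl rfl)⟩
    · obtain ⟨c, hc, rfl⟩ := hgM (mem_univ i)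
      exact ⟨singElem M F hc, hsing c hc⟩
  · rw [hsing c hc, hsing d hd]
    exact Option.some_inj.trans (hg c hc d hd)
  · rw [hsing a ha]
    exact Red.collapse_of_image_eq (image_pair_eq_singleton hgab)
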